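/- arXiv:2206.11495 — 2 statements merged into one kernel-verified Lean document; each statement's English description precedes it below -/
import Mathlib

section
/- If ⟨u(n)⟩ and ⟨v(n)⟩ are C-finite sequences of order r and s respectively, then the pointwise product ⟨u(n)·v(n)⟩ is C-finite of order at most r·s. -/
open Finset Submodule Pointwise

namespace CFiniteAux

variable {K : Type*} [Field K]

/-- The shift operator on sequences, as a linear endomorphism. -/
def Sh (K : Type*) [Field K] : Module.End K (ℕ → K) where
  toFun f := fun n => f (n + 1)
  map_add' _ _ := rfl
  map_smul' _ _ := rfl

lemma sh_apply (x : ℕ → K) (n : ℕ) : Sh K x n = x (n + 1) := rfl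

lemma sh_pow_apply : ∀ (k : ℕ) (x : ℕ → K) (n : ℕ), (Sh K ^ k) x n = x (n + k)
  | 0, x, n => by simp [pow_zero, Module.End.one_apply]
  | (k+1), x, n => by
      rw [pow_succ', Module.End.mul_apply, sh_apply, sh_pow_apply k x (n + 1)]
      congr 1
      omega

lemma sh_mul (x y : ℕ → K) : Sh K (x * y) = Sh K x * Sh K y := rfl

/-- Every shift of `u` lies in the span of the first `r` shifts. -/
lemma mem_span_fin (u : ℕ → K) (r : ℕ) (c : ℕ → K)
    (hrec : ∀ n : ℕ, u (n + r) + ∑ i ∈ Finset.range r, c i * u (n + i) = 0) (k : ℕ) :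
    (Sh K ^ k) u ∈ span K (Set.range fun i : Fin r => (Sh K ^ (i : ℕ)) u) := by
  induction k using Nat.strong_induction_on with
  | _ k ih =>
    rcases lt_or_ge k r with h | h
    · exact subset_span ⟨⟨k, h⟩, rfl⟩
    · have hk : (Sh K ^ k) u = -∑ i ∈ Finset.range r, c i • (Sh K ^ (k - r + i)) u := by
        funext n
        simp only [Pi.neg_apply, Finset.sum_apply, Pi.smul_apply, smul_eq_mul, sh_pow_apply]
        have h2 := hrec (n + (k - r))
        have e1 : n + (k - r) + r = n + k := by omega
        have h3 : ∑ i ∈ Finset.range r, c i * u (n + (k - r) + i)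
            = ∑ i ∈ Finset.range r, c i * u (n + (k - r + i)) :=
          Finset.sum_congr rfl fun i _ => by rw [show n + (k - r) + i = n + (k - r + i) by omega]
        rw [e1, h3] at h2
        linear_combination h2
      rw [hk]
      exact neg_mem (sum_mem fun i hi =>
        smul_mem _ _ (ih _ (by have := Finset.mem_range.mp hi; omega)))

/-- Every shift of `u` is itself the shift of something in the span
(the shift operator is surjective on the span). -/
lemma exists_sh_eq (u : ℕ → K) (r : ℕ) (c : ℕ → K) (hc0 : c 0 ≠ 0)
    (hrec : ∀ n : ℕ, u (n + r) + ∑ i ∈ Finset.range r, c i * u (n + i) = 0) (k : ℕ) :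
    ∃ y ∈ span K (Set.range fun i : Fin r => (Sh K ^ (i : ℕ)) u),
      Sh K y = (Sh K ^ k) u := by
  rcases k with _ | j
  · -- k = 0 : go backwards using the recurrence
    rcases Nat.eq_zero_or_pos r with hr | hr
    · -- r = 0 : u = 0
      subst hr
      have hu0 : u = 0 := by
        funext n
        have := hrec n
        simpa using this
      refine ⟨0, zero_mem _, ?_⟩
      simp [hu0, map_zero]
    · obtain ⟨r', rfl⟩ : ∃ r', r = r' + 1 := ⟨r - 1, by omega⟩
      refine ⟨-(c 0)⁻¹ • ((Sh K ^ r') u + ∑ j ∈ Finset.range r', c (j + 1) • (Sh K ^ j) u),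
        ?_, ?_⟩
      · exact smul_mem _ _ (add_mem (subset_span ⟨⟨r', by omega⟩, rfl⟩)
          (sum_mem fun j hj => smul_mem _ _
            (subset_span ⟨⟨j, by have := Finset.mem_range.mp hj; omega⟩, rfl⟩)))
      · funext n
        simp only [sh_apply, Pi.smul_apply, Pi.add_apply, Finset.sum_apply, smul_eq_mul,
          sh_pow_apply, pow_zero, Module.End.one_apply]
        have h2 := hrec n
        rw [Finset.sum_range_succ'] at h2
        have h3 : ∑ j ∈ Finset.range r', c (j + 1) * u (n + 1 + j)
            = ∑ j ∈ Finset.range r', c (j + 1) * u (n + (j + 1)) :=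
          Finset.sum_congr rfl fun j _ => by rw [show n + 1 + j = n + (j + 1) by omega]
        rw [h3, show n + 1 + r' = n + (r' + 1) by omega]
        simp only [Nat.add_zero] at h2
        field_simp
        linear_combination -h2
  · -- k = j + 1
    exact ⟨(Sh K ^ j) u, mem_span_fin u r c hrec j, by rw [← Module.End.mul_apply, ← pow_succ']⟩

lemma sh_pow_mul (k : ℕ) (x y : ℕ → K) :
    (Sh K ^ k) (x * y) = (Sh K ^ k) x * (Sh K ^ k) y := by
  funext n
  simp [sh_pow_apply, Pi.mul_apply]

end CFiniteAux


/-- `u` is C-finite of order `r`: it satisfies a linear recurrence with constant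
coefficients of order `r` whose trailing coefficient is nonzero. -/
def IsCFinite {K : Type*} [Field K] (u : ℕ → K) (r : ℕ) : Prop :=
  ∃ c : ℕ → K, c 0 ≠ 0 ∧
    ∀ n : ℕ, u (n + r) + ∑ i ∈ Finset.range r, c i * u (n + i) = 0

open CFiniteAux in
theorem cfinite_mul {K : Type*} [Field K] [CharZero K]
    (u v : ℕ → K) (r s : ℕ) (hu : IsCFinite u r) (hv : IsCFinite v s) :
    ∃ t ≤ r * s, IsCFinite (fun n => u n * v n) t := by
  classical
  obtain ⟨c, hc0, hcrec⟩ := hu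
  obtain ⟨d, hd0, hdrec⟩ := hv
  set Fu : Fin r → (ℕ → K) := fun i => (Sh K ^ (i : ℕ)) u with hFu
  set Fv : Fin s → (ℕ → K) := fun j => (Sh K ^ (j : ℕ)) v with hFv
  set A : Set (ℕ → K) := Set.range Fu with hA
  set B : Set (ℕ → K) := Set.range Fv with hB
  set W : Submodule K (ℕ → K) := span K A * span K B with hW
  set g : Fin r × Fin s → (ℕ → K) := fun p => Fu p.1 * Fv p.2 with hg
  have hAB : A * B = Set.range g := by
    ext x
    simp only [Set.mem_mul, Set.mem_range, hA, hB]
    constructor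
    · rintro ⟨a, ⟨i, rfl⟩, b, ⟨j, rfl⟩, rfl⟩
      exact ⟨(i, j), rfl⟩
    · rintro ⟨⟨i, j⟩, rfl⟩
      exact ⟨Fu i, ⟨i, rfl⟩, Fv j, ⟨j, rfl⟩, rfl⟩
  have hWeq : W = span K (Set.range g) := by
    rw [hW, span_mul_span, hAB]
  haveI : FiniteDimensional K ↥W :=
    hWeq ▸ FiniteDimensional.span_of_finite K (Set.finite_range g)
  have hD : Module.finrank K ↥W ≤ r * s := by
    rw [hWeq]
    exact (finrank_range_le_card g).trans (by simp)
  have hmul : ∀ x ∈ span K A, ∀ y ∈ span K B, x * y ∈ W :=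
    fun x hx y hy => mul_mem_mul hx hy
  have humem : ∀ k : ℕ, (Sh K ^ k) u ∈ span K A := fun k => mem_span_fin u r c hcrec k
  have hvmem : ∀ k : ℕ, (Sh K ^ k) v ∈ span K B := fun k => mem_span_fin v s d hdrec k
  set w : ℕ → K := u * v with hwdef
  have hmemk : ∀ k : ℕ, (Sh K ^ k) w ∈ W := fun k => by
    rw [hwdef, sh_pow_mul]
    exact hmul _ (humem k) _ (hvmem k)
  have hgen : ∀ p : Fin r × Fin s, Sh K (g p)
      = ((Sh K ^ ((p.1 : ℕ) + 1)) u) * ((Sh K ^ ((p.2 : ℕ) + 1)) v) := by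
    rintro ⟨i, j⟩
    simp only [hg, hFu, hFv]
    rw [sh_mul, ← Module.End.mul_apply (Sh K), ← pow_succ', ← Module.End.mul_apply (Sh K),
      ← pow_succ']
  have hSmaps : ∀ x ∈ W, Sh K x ∈ W := by
    intro x hx
    rw [hWeq] at hx
    refine span_induction ?_ ?_ ?_ ?_ hx
    · rintro y ⟨p, rfl⟩
      rw [hgen p]
      exact hmul _ (humem _) _ (hvmem _)
    · rw [map_zero]; exact zero_mem _
    · intro y z _ _ hy hz
      rw [map_add]; exact add_mem hy hz
    · intro a y _ hy
      rw [map_smul]; exact smul_mem _ _ hy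
  have hSsurj : ∀ x ∈ W, ∃ y ∈ W, Sh K y = x := by
    intro x hx
    rw [hWeq] at hx
    refine span_induction ?_ ?_ ?_ ?_ hx
    · rintro p ⟨⟨i, j⟩, rfl⟩
      obtain ⟨a, ha, hsa⟩ := exists_sh_eq u r c hc0 hcrec (i : ℕ)
      obtain ⟨b, hb, hsb⟩ := exists_sh_eq v s d hd0 hdrec (j : ℕ)
      exact ⟨a * b, hmul _ ha _ hb, by rw [sh_mul, hsa, hsb]⟩
    · exact ⟨0, zero_mem _, map_zero _⟩
    · rintro y z _ _ ⟨y', hy', rfl⟩ ⟨z', hz', rfl⟩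
      exact ⟨y' + z', add_mem hy' hz', map_add _ _ _⟩
    · rintro a y _ ⟨y', hy', rfl⟩
      exact ⟨a • y', smul_mem _ _ hy', map_smul _ _ _⟩
  have hker : ∀ x ∈ W, Sh K x = 0 → x = 0 := by
    set T : ↥W →ₗ[K] ↥W := (Sh K).restrict hSmaps with hT
    have hTsurj : Function.Surjective T := by
      rintro ⟨x, hx⟩
      obtain ⟨y, hyW, hy⟩ := hSsurj x hx
      exact ⟨⟨y, hyW⟩, Subtype.ext hy⟩
    have hTinj : Function.Injective T := LinearMap.injective_iff_surjective.mpr hTsurj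
    intro x hx hsx
    have h1 : T ⟨x, hx⟩ = T 0 := by
      apply Subtype.ext
      simp [hT, LinearMap.restrict_apply, hsx]
    simpa using congrArg Subtype.val (hTinj h1)
  have hkerpow : ∀ m : ℕ, ∀ x ∈ W, (Sh K ^ m) x = 0 → x = 0 := by
    intro m
    induction m with
    | zero => intro x _ hx; simpa using hx
    | succ m ih =>
      intro x hxW hx
      rw [pow_succ, Module.End.mul_apply] at hx
      exact hker x hxW (ih _ (hSmaps x hxW) hx)
  set D : ℕ := Module.finrank K ↥W with hDdef
  set f : Fin (D + 1) → ↥W := fun k => ⟨(Sh K ^ (k : ℕ)) w, hmemk _⟩ with hf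
  have hnli : ¬ LinearIndependent K f := by
    intro hli
    have := hli.fintype_card_le_finrank
    simp only [Fintype.card_fin, ← hDdef] at this
    omega
  obtain ⟨a, hsum, i0, hi0⟩ := Fintype.not_linearIndependent_iff.mp hnli
  have hsum' : ∑ i : Fin (D + 1), a i • (Sh K ^ (i : ℕ)) w = 0 := by
    have := congrArg Subtype.val hsum
    simpa [hf] using this
  set b : ℕ → K := fun k => if h : k < D + 1 then a ⟨k, h⟩ else 0 with hb
  have hbsum : ∑ k ∈ Finset.range (D + 1), b k • (Sh K ^ k) w = 0 := by
    rw [Finset.sum_range]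
    refine Eq.trans (Finset.sum_congr rfl fun i _ => ?_) hsum'
    congr 1
    simp [hb, i.isLt, Nat.lt_add_one_iff.mp i.isLt]
  have hbex : ∃ k, b k ≠ 0 := ⟨(i0 : ℕ), by simpa [hb, i0.isLt, Nat.lt_add_one_iff.mp i0.isLt] using hi0⟩
  set m : ℕ := Nat.find hbex with hm
  have hbm : b m ≠ 0 := Nat.find_spec hbex
  have hmin : ∀ k, k < m → b k = 0 := fun k hk => not_not.mp (Nat.find_min hbex hk)
  have hmN : m < D + 1 := by
    by_contra hcon
    exact hbm (by simp only [hb]; exact dif_neg hcon)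
  set z : ℕ → K := ∑ k ∈ Finset.range (D + 1 - m), b (m + k) • (Sh K ^ k) w with hz
  have hzW : z ∈ W := sum_mem fun k _ => smul_mem _ _ (hmemk k)
  have hz0 : (Sh K ^ m) z = 0 := by
    rw [hz, map_sum]
    have e1 : ∀ k ∈ Finset.range (D + 1 - m),
        (Sh K ^ m) (b (m + k) • (Sh K ^ k) w) = b (m + k) • (Sh K ^ (m + k)) w := by
      intro k _
      rw [map_smul, ← Module.End.mul_apply, ← pow_add]
    rw [Finset.sum_congr rfl e1]
    have e2 : ∑ k ∈ Finset.range (D + 1), b k • (Sh K ^ k) w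
        = ∑ k ∈ Finset.range m, b k • (Sh K ^ k) w
          + ∑ k ∈ Finset.Ico m (D + 1), b k • (Sh K ^ k) w :=
      (Finset.sum_range_add_sum_Ico _ (le_of_lt hmN)).symm
    rw [Finset.sum_Ico_eq_sum_range] at e2
    have e3 : ∑ k ∈ Finset.range m, b k • (Sh K ^ k) w = 0 :=
      Finset.sum_eq_zero fun k hk => by
        rw [hmin k (Finset.mem_range.mp hk), zero_smul]
    rw [hbsum, e3, zero_add] at e2
    exact e2.symm
  have hzeq : z = 0 := hkerpow m z hzW hz0
  set M : ℕ := D + 1 - m with hM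
  set F : Finset ℕ := (Finset.range M).filter (fun k => b (m + k) ≠ 0) with hF
  have hF0 : (0 : ℕ) ∈ F := by
    rw [hF, Finset.mem_filter, Finset.mem_range]
    exact ⟨by omega, by simpa using hbm⟩
  set L : ℕ := F.max' ⟨0, hF0⟩ with hL
  have hLmem : L ∈ F := Finset.max'_mem _ _
  have hLM : L < M := Finset.mem_range.mp (Finset.mem_filter.mp hLmem).1
  have hbL : b (m + L) ≠ 0 := (Finset.mem_filter.mp hLmem).2
  have hgt : ∀ k, k < M → L < k → b (m + k) = 0 := by
    intro k h1 h2
    by_contra hcon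
    have hkF : k ∈ F := Finset.mem_filter.mpr ⟨Finset.mem_range.mpr h1, hcon⟩
    exact absurd (Finset.le_max' F k hkF) (by omega)
  refine ⟨L, by omega, fun i => b (m + i) * (b (m + L))⁻¹,
    mul_ne_zero hbm (inv_ne_zero hbL), ?_⟩
  intro n
  have hzn : ∑ k ∈ Finset.range M, b (m + k) * w (n + k) = 0 := by
    have h0 := congrFun hzeq n
    simpa [hz, Finset.sum_apply, Pi.smul_apply, smul_eq_mul, sh_pow_apply, hM] using h0
  have hsub : ∑ k ∈ Finset.range (L + 1), b (m + k) * w (n + k)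
      = ∑ k ∈ Finset.range M, b (m + k) * w (n + k) := by
    refine Finset.sum_subset (Finset.range_subset_range.mpr (by omega)) ?_
    intro k hk hk2
    have hkM : k < M := Finset.mem_range.mp hk
    have hkL : L < k := by
      by_contra hcon
      exact hk2 (Finset.mem_range.mpr (by omega))
    rw [hgt k hkM hkL, zero_mul]
  have key : ∑ k ∈ Finset.range L, b (m + k) * w (n + k) + b (m + L) * w (n + L) = 0 := by
    rw [← Finset.sum_range_succ, hsub]
    exact hzn
  show w (n + L) + ∑ i ∈ Finset.range L, (b (m + i) * (b (m + L))⁻¹) * w (n + i) = 0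
  have e4 : ∑ i ∈ Finset.range L, (b (m + i) * (b (m + L))⁻¹) * w (n + i)
      = (b (m + L))⁻¹ * ∑ i ∈ Finset.range L, b (m + i) * w (n + i) := by
    rw [Finset.mul_sum]
    exact Finset.sum_congr rfl fun i _ => by ring
  rw [e4]
  field_simp
  linear_combination key
end

section
/- Let p(n) = q₀(n) + n·q₁(n) + n²·q₂(n) + ⋯ + n^k·q_k(n) where each qᵢ(n) = wᵢ₁ⁿuᵢ₁ + ⋯ + wᵢℓⁿuᵢℓ with constants uᵢⱼ ∈ K and nonzero wᵢⱼ ∈ K. Then p(n) = 0 for all n ∈ ℕ if and only if qᵢ(n) = 0 for all n ∈ ℕ and all i = 0,...,k. -/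
open Polynomial Finset

lemma nat_eval_zero {K : Type*} [Field K] [CharZero K] (p : K[X])
    (h : ∀ n : ℕ, p.eval (n : K) = 0) : p = 0 :=
  p.eq_zero_of_infinite_isRoot <|
    Set.infinite_of_injective_forall_mem (f := (Nat.cast : ℕ → K))
      Nat.cast_injective (fun n => h n)

lemma shift_eval_eq_const {K : Type*} [Field K] [CharZero K] (p : K[X])
    (h : p.comp (X + 1) = p) : p.natDegree = 0 := by
  have hev : ∀ n : ℕ, p.eval (n : K) = p.eval 0 := by
    intro n
    induction n with
    | zero => norm_num
    | succ m ih =>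
      have := congrArg (fun r => Polynomial.eval (m : K) r) h
      simp only [eval_comp, eval_add, eval_X, eval_one] at this
      push_cast
      rw [this, ih]
  have : p - C (p.eval 0) = 0 := by
    apply nat_eval_zero
    intro n
    simp [hev n]
  have hp : p = C (p.eval 0) := sub_eq_zero.mp this
  rw [hp]; exact natDegree_C _

lemma comp_coeff_natDegree {K : Type*} [Field K] (p : K[X]) :
    (p.comp (X + 1)).coeff p.natDegree = p.leadingCoeff := by
  have h1 : (X + 1 : K[X]) = X + C 1 := by rw [map_one]
  have hnd : (p.comp (X + 1)).natDegree = p.natDegree := by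
    rw [natDegree_comp, h1, natDegree_X_add_C, mul_one]
  rw [← hnd, coeff_natDegree, leadingCoeff_comp (by rw [h1, natDegree_X_add_C]; norm_num),
    h1, leadingCoeff_X_add_C, one_pow, mul_one]

lemma exp_poly_indep {K : Type*} [Field K] [CharZero K] :
    ∀ (N : ℕ) (S : Finset K) (p : K → K[X]),
      (∑ ω ∈ S, (p ω).natDegree) + S.card ≤ N →
      (∀ ω ∈ S, ω ≠ 0) →
      (∀ n : ℕ, ∑ ω ∈ S, (p ω).eval (n : K) * ω ^ n = 0) →
      ∀ ω ∈ S, p ω = 0 := by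
  classical
  intro N
  induction N with
  | zero =>
    intro S p hN h0 hf ω hω
    have : S.card = 0 := by omega
    rw [Finset.card_eq_zero] at this
    simp [this] at hω
  | succ N IH =>
    intro S p hN h0 hf
    rcases S.eq_empty_or_nonempty with rfl | ⟨ω₀, hω₀⟩
    · simp
    set q : K → K[X] := fun ω => C ω * (p ω).comp (X + 1) - C ω₀ * p ω with hqdef
    have hqeval : ∀ (ω : K) (x : K),
        (q ω).eval x = ω * (p ω).eval (x + 1) - ω₀ * (p ω).eval x := by
      intro ω x
      simp [hqdef, eval_comp]
    have hg : ∀ n : ℕ, ∑ ω ∈ S, (q ω).eval (n : K) * ω ^ n = 0 := by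
      intro n
      have e1 : ∑ ω ∈ S, (q ω).eval (n : K) * ω ^ n
          = (∑ ω ∈ S, (p ω).eval ((n + 1 : ℕ) : K) * ω ^ (n + 1))
            - ω₀ * ∑ ω ∈ S, (p ω).eval (n : K) * ω ^ n := by
        rw [Finset.mul_sum, ← Finset.sum_sub_distrib]
        refine Finset.sum_congr rfl fun ω _ => ?_
        rw [hqeval]
        push_cast
        ring
      rw [e1, hf n, hf (n + 1)]
      ring
    have hqzero_imp : ∀ ω ∈ S, ω ≠ ω₀ → q ω = 0 → p ω = 0 := by
      intro ω _ hne hq0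
      by_contra hp0
      have hc : (q ω).coeff (p ω).natDegree = (ω - ω₀) * (p ω).leadingCoeff := by
        simp only [hqdef, coeff_sub, coeff_C_mul, comp_coeff_natDegree]
        rw [← leadingCoeff]
        ring
      rw [hq0, coeff_zero] at hc
      have := mul_eq_zero.mp hc.symm
      rcases this with h | h
      · exact hne (sub_eq_zero.mp h)
      · exact hp0 (leadingCoeff_eq_zero.mp h)
    have hqdeg : ∀ ω, (q ω).natDegree ≤ (p ω).natDegree := by
      intro ω
      refine le_trans (natDegree_sub_le _ _) (max_le ?_ ?_)
      · refine le_trans (natDegree_C_mul_le _ _) ?_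
        rw [natDegree_comp]
        have : (X + 1 : K[X]) = X + C 1 := by rw [map_one]
        rw [this, natDegree_X_add_C, mul_one]
      · exact natDegree_C_mul_le _ _
    by_cases hd : (p ω₀).natDegree = 0
    · have hpc : p ω₀ = C ((p ω₀).coeff 0) := Polynomial.eq_C_of_natDegree_eq_zero hd
      have hq0 : q ω₀ = 0 := by
        simp only [hqdef]
        rw [hpc]
        simp
      have hg' : ∀ n : ℕ, ∑ ω ∈ S.erase ω₀, (q ω).eval (n : K) * ω ^ n = 0 := by
        intro n
        have h := hg n
        rwa [← Finset.add_sum_erase S _ hω₀, hq0, eval_zero, zero_mul, zero_add] at h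
      have hmeas : (∑ ω ∈ S.erase ω₀, (q ω).natDegree) + (S.erase ω₀).card ≤ N := by
        have h1 : (S.erase ω₀).card + 1 = S.card := Finset.card_erase_add_one hω₀
        have h2 : ∑ ω ∈ S.erase ω₀, (q ω).natDegree ≤ ∑ ω ∈ S.erase ω₀, (p ω).natDegree :=
          Finset.sum_le_sum fun ω _ => hqdeg ω
        have h3 : ∑ ω ∈ S.erase ω₀, (p ω).natDegree ≤ ∑ ω ∈ S, (p ω).natDegree :=
          Finset.sum_le_sum_of_subset (Finset.erase_subset _ _)
        omega
      have hqz := IH (S.erase ω₀) q hmeas (fun ω hω => h0 ω (Finset.mem_of_mem_erase hω)) hg'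
      have hpz : ∀ ω ∈ S.erase ω₀, p ω = 0 := fun ω hω =>
        hqzero_imp ω (Finset.mem_of_mem_erase hω) (Finset.ne_of_mem_erase hω) (hqz ω hω)
      have hpω₀ : p ω₀ = 0 := by
        apply nat_eval_zero
        intro n
        have h := hf n
        rw [← Finset.add_sum_erase S _ hω₀,
          Finset.sum_eq_zero (fun ω hω => by rw [hpz ω hω]; simp), add_zero] at h
        exact (mul_eq_zero.mp h).resolve_right (pow_ne_zero _ (h0 ω₀ hω₀))
      intro ω hω
      rcases eq_or_ne ω ω₀ with rfl | hne
      · exact hpω₀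
      · exact hpz ω (Finset.mem_erase.mpr ⟨hne, hω⟩)
    · exfalso
      have hp0 : p ω₀ ≠ 0 := fun h => hd (by rw [h]; simp)
      have hlc : ((p ω₀).comp (X + 1)).leadingCoeff = (p ω₀).leadingCoeff := by
        have hnd : ((p ω₀).comp (X + 1)).natDegree = (p ω₀).natDegree := by
          have h1 : (X + 1 : K[X]) = X + C 1 := by rw [map_one]
          rw [natDegree_comp, h1, natDegree_X_add_C, mul_one]
        rw [leadingCoeff, hnd, comp_coeff_natDegree]
      have hcompne : (p ω₀).comp (X + 1) ≠ 0 := by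
        intro h
        rw [h, leadingCoeff_zero] at hlc
        exact hp0 (leadingCoeff_eq_zero.mp hlc.symm)
      have hdeg0 : ((p ω₀).comp (X + 1) - p ω₀).natDegree < (p ω₀).natDegree := by
        rcases eq_or_ne ((p ω₀).comp (X + 1) - p ω₀) 0 with h | h
        · rw [h, natDegree_zero]; omega
        · have hdlt : ((p ω₀).comp (X + 1) - p ω₀).degree < (p ω₀).degree := by
            have hdeq : ((p ω₀).comp (X + 1)).degree = (p ω₀).degree := by
              rw [degree_eq_natDegree hcompne, degree_eq_natDegree hp0]
              norm_cast
              have h1 : (X + 1 : K[X]) = X + C 1 := by rw [map_one]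
              rw [natDegree_comp, h1, natDegree_X_add_C, mul_one]
            have := degree_sub_lt hdeq hcompne hlc
            rwa [hdeq] at this
          rw [degree_eq_natDegree hp0] at hdlt
          exact_mod_cast (Polynomial.natDegree_lt_iff_degree_lt h).mpr hdlt
      have hdq0 : (q ω₀).natDegree < (p ω₀).natDegree := by
        have hq : q ω₀ = C ω₀ * ((p ω₀).comp (X + 1) - p ω₀) := by
          simp only [hqdef]; ring
        rw [hq]
        exact lt_of_le_of_lt (natDegree_C_mul_le _ _) hdeg0
      have hmeas : (∑ ω ∈ S, (q ω).natDegree) + S.card ≤ N := by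
        have e1 : (q ω₀).natDegree + ∑ ω ∈ S.erase ω₀, (q ω).natDegree
            = ∑ ω ∈ S, (q ω).natDegree :=
          Finset.add_sum_erase S (fun ω => (q ω).natDegree) hω₀
        have e2 : (p ω₀).natDegree + ∑ ω ∈ S.erase ω₀, (p ω).natDegree
            = ∑ ω ∈ S, (p ω).natDegree :=
          Finset.add_sum_erase S (fun ω => (p ω).natDegree) hω₀
        have h2 : ∑ ω ∈ S.erase ω₀, (q ω).natDegree ≤ ∑ ω ∈ S.erase ω₀, (p ω).natDegree :=
          Finset.sum_le_sum fun ω _ => hqdeg ω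
        omega
      have hqz := IH S q hmeas h0 hg
      have hcomp : (p ω₀).comp (X + 1) = p ω₀ := by
        have h := hqz ω₀ hω₀
        have h2 : C ω₀ * ((p ω₀).comp (X + 1) - p ω₀) = 0 := by
          rw [← h]; simp only [hqdef]; ring
        rcases mul_eq_zero.mp h2 with h' | h'
        · exact absurd (C_eq_zero.mp h') (h0 ω₀ hω₀)
        · exact sub_eq_zero.mp h'
      exact hd (shift_eval_eq_const _ hcomp)

theorem coeff_zero_prop {K : Type*} [Field K] [IsAlgClosed K] [CharZero K]
    {k ℓ : ℕ} (w u : Fin (k + 1) → Fin ℓ → K) (hw : ∀ i j, w i j ≠ 0)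
    (q : Fin (k + 1) → ℕ → K)
    (hq : ∀ i n, q i n = ∑ j : Fin ℓ, w i j ^ n * u i j) :
    (∀ n : ℕ, ∑ i : Fin (k + 1), (n : K) ^ (i : ℕ) * q i n = 0) ↔
      ∀ i, ∀ n : ℕ, q i n = 0 := by
  classical
  constructor
  · intro h
    set W : Finset K := Finset.image (fun ij : Fin (k + 1) × Fin ℓ => w ij.1 ij.2)
      Finset.univ with hW
    set p : K → K[X] := fun ω => ∑ i' : Fin (k + 1), ∑ j : Fin ℓ,
      if w i' j = ω then C (u i' j) * X ^ (i' : ℕ) else 0 with hp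
    have hmem : ∀ i' j, w i' j ∈ W := fun i' j =>
      Finset.mem_image.mpr ⟨(i', j), Finset.mem_univ _, rfl⟩
    have hWne : ∀ ω ∈ W, ω ≠ 0 := by
      intro ω hω
      rw [hW, Finset.mem_image] at hω
      obtain ⟨ij, _, rfl⟩ := hω
      exact hw ij.1 ij.2
    have hpe : ∀ (ω : K) (x : K), (p ω).eval x
        = ∑ i' : Fin (k + 1), ∑ j : Fin ℓ,
            if w i' j = ω then u i' j * x ^ (i' : ℕ) else 0 := by
      intro ω x
      rw [hp]
      simp [eval_finset_sum, apply_ite (Polynomial.eval x)]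
    have hf : ∀ m : ℕ, ∑ ω ∈ W, (p ω).eval (m : K) * ω ^ m = 0 := by
      intro m
      calc ∑ ω ∈ W, (p ω).eval (m : K) * ω ^ m
          = ∑ ω ∈ W, ∑ i' : Fin (k + 1), ∑ j : Fin ℓ,
              (if w i' j = ω then u i' j * (m : K) ^ (i' : ℕ) * (w i' j) ^ m else 0) := by
            refine Finset.sum_congr rfl fun ω _ => ?_
            rw [hpe, Finset.sum_mul]
            refine Finset.sum_congr rfl fun i' _ => ?_
            rw [Finset.sum_mul]
            refine Finset.sum_congr rfl fun j _ => ?_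
            split_ifs with hc
            · rw [hc]
            · rw [zero_mul]
        _ = ∑ i' : Fin (k + 1), ∑ j : Fin ℓ, ∑ ω ∈ W,
              (if w i' j = ω then u i' j * (m : K) ^ (i' : ℕ) * (w i' j) ^ m else 0) := by
            rw [Finset.sum_comm]
            exact Finset.sum_congr rfl fun i' _ => Finset.sum_comm
        _ = ∑ i' : Fin (k + 1), ∑ j : Fin ℓ,
              u i' j * (m : K) ^ (i' : ℕ) * (w i' j) ^ m := by
            refine Finset.sum_congr rfl fun i' _ => Finset.sum_congr rfl fun j _ => ?_
            rw [Finset.sum_ite_eq W (w i' j)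
              (fun _ => u i' j * (m : K) ^ (i' : ℕ) * (w i' j) ^ m), if_pos (hmem i' j)]
        _ = ∑ i' : Fin (k + 1), (m : K) ^ (i' : ℕ) * q i' m := by
            refine Finset.sum_congr rfl fun i' _ => ?_
            rw [hq, Finset.mul_sum]
            exact Finset.sum_congr rfl fun j _ => by ring
        _ = 0 := h m
    have hp0 : ∀ ω ∈ W, p ω = 0 :=
      exp_poly_indep ((∑ ω ∈ W, (p ω).natDegree) + W.card) W p le_rfl hWne hf
    intro i n
    have hcoeff : ∀ ω, (p ω).coeff (i : ℕ)
        = ∑ j : Fin ℓ, if w i j = ω then u i j else 0 := by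
      intro ω
      rw [hp]
      simp only [finset_sum_coeff, apply_ite (fun r : K[X] => r.coeff (i : ℕ)),
        coeff_C_mul, coeff_X_pow, coeff_zero, mul_ite, mul_one, mul_zero]
      rw [Finset.sum_eq_single i]
      · simp
      · intro i' _ hne
        apply Finset.sum_eq_zero
        intro j _
        have hne' : ¬((i : ℕ) = (i' : ℕ)) := fun hh => hne (Fin.ext hh.symm)
        simp [hne']
      · intro hh
        exact absurd (Finset.mem_univ i) hh
    calc q i n
        = ∑ j : Fin ℓ, ∑ ω ∈ W, (if w i j = ω then (w i j) ^ n * u i j else 0) := by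
          rw [hq]
          refine Finset.sum_congr rfl fun j _ => ?_
          rw [Finset.sum_ite_eq W (w i j) (fun _ => (w i j) ^ n * u i j), if_pos (hmem i j)]
      _ = ∑ ω ∈ W, ∑ j : Fin ℓ, (if w i j = ω then (w i j) ^ n * u i j else 0) :=
          Finset.sum_comm
      _ = ∑ ω ∈ W, ω ^ n * ∑ j : Fin ℓ, (if w i j = ω then u i j else 0) := by
          refine Finset.sum_congr rfl fun ω _ => ?_
          rw [Finset.mul_sum]
          refine Finset.sum_congr rfl fun j _ => ?_
          split_ifs with hc
          · rw [hc]
          · rw [mul_zero]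
      _ = 0 := by
          apply Finset.sum_eq_zero
          intro ω hω
          rw [← hcoeff ω, hp0 ω hω, coeff_zero, mul_zero]
  · intro h n
    apply Finset.sum_eq_zero
    intro i _
    rw [h i n, mul_zero]
end
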